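/- Let v∞ ∈ ℝ^(n+2) be non-zero light-like and fix v₀ ∈ S_{v∞}. Then the map Φ(v) = v − v₀ + B(v,v₀) • v∞ is a bijection from S_{v∞} onto the subspace {x ∈ ℝ^(n+2) : B(x,v₀) = 0 and B(x,v∞) = 0}, with inverse Ψ(x) = x + v₀ + (1/2)·B(x,x) • v∞. (This identifies S_{v∞} with Euclidean n-space when v∞ is light-like.) -/
import Mathlib


/-- The Minkowski bilinear form of signature `(n+1, 1)` on `ℝ^(n+2)`. -/
noncomputable def B (n : ℕ) (u v : Fin (n + 2) → ℝ) : ℝ :=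
  (∑ i : Fin (n + 1), u i.castSucc * v i.castSucc) -
    u (Fin.last (n + 1)) * v (Fin.last (n + 1))

lemma B_add_left (n : ℕ) (u v w : Fin (n + 2) → ℝ) :
    B n (u + v) w = B n u w + B n v w := by
  simp [B, add_mul, Finset.sum_add_distrib]; ring

lemma B_sub_left (n : ℕ) (u v w : Fin (n + 2) → ℝ) :
    B n (u - v) w = B n u w - B n v w := by
  simp [B, sub_mul, Finset.sum_sub_distrib]; ring

lemma B_smul_left (n : ℕ) (a : ℝ) (u w : Fin (n + 2) → ℝ) :
    B n (a • u) w = a * B n u w := by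
  simp [B, mul_sub, Finset.mul_sum]; ring_nf

lemma B_symm (n : ℕ) (u v : Fin (n + 2) → ℝ) : B n u v = B n v u := by
  simp [B, mul_comm]

lemma B_add_right (n : ℕ) (u v w : Fin (n + 2) → ℝ) :
    B n w (u + v) = B n w u + B n w v := by
  rw [B_symm, B_add_left, B_symm n u w, B_symm n v w]

lemma B_sub_right (n : ℕ) (u v w : Fin (n + 2) → ℝ) :
    B n w (u - v) = B n w u - B n w v := by
  rw [B_symm, B_sub_left, B_symm n u w, B_symm n v w]

lemma B_smul_right (n : ℕ) (a : ℝ) (u w : Fin (n + 2) → ℝ) :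
    B n w (a • u) = a * B n w u := by
  rw [B_symm, B_smul_left, B_symm]

/-- For non-zero light-like `v∞` and `v₀ ∈ S_{v∞}`, the map
`Φ(v) = v - v₀ + B(v,v₀) • v∞` is a bijection from `S_{v∞}` onto the subspace
`{x : B(x,v₀) = 0 ∧ B(x,v∞) = 0}`, with inverse `Ψ(x) = x + v₀ + (1/2)·B(x,x) • v∞`. -/
theorem statement5 (n : ℕ) (vinf v₀ : Fin (n + 2) → ℝ)
    (hne : vinf ≠ 0) (hlight : B n vinf vinf = 0)
    (hv₀null : B n v₀ v₀ = 0) (hv₀inf : B n v₀ vinf = -1) :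
    Set.BijOn (fun v : Fin (n + 2) → ℝ => v - v₀ + B n v v₀ • vinf)
        {v | B n v v = 0 ∧ B n v vinf = -1}
        {x | B n x v₀ = 0 ∧ B n x vinf = 0} ∧
      Set.InvOn (fun x : Fin (n + 2) → ℝ => x + v₀ + ((1 : ℝ) / 2 * B n x x) • vinf)
        (fun v : Fin (n + 2) → ℝ => v - v₀ + B n v v₀ • vinf)
        {v | B n v v = 0 ∧ B n v vinf = -1}
        {x | B n x v₀ = 0 ∧ B n x vinf = 0} := by
  have hinfv₀ : B n vinf v₀ = -1 := by rw [B_symm]; exact hv₀inf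
  have hmaps1 : Set.MapsTo (fun v : Fin (n + 2) → ℝ => v - v₀ + B n v v₀ • vinf)
      {v | B n v v = 0 ∧ B n v vinf = -1} {x | B n x v₀ = 0 ∧ B n x vinf = 0} := by
    rintro v ⟨hv, hvinf⟩
    constructor <;>
      simp only [Set.mem_setOf_eq, B_add_left, B_sub_left, B_smul_left, hv₀null, hv₀inf,
        hlight, hinfv₀, hvinf] <;> ring
  have hmaps2 : Set.MapsTo (fun x : Fin (n + 2) → ℝ => x + v₀ + ((1 : ℝ) / 2 * B n x x) • vinf)
      {x | B n x v₀ = 0 ∧ B n x vinf = 0} {v | B n v v = 0 ∧ B n v vinf = -1} := by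
    rintro x ⟨hxv₀, hxinf⟩
    have hv₀x : B n v₀ x = 0 := by rw [B_symm]; exact hxv₀
    have hinfx : B n vinf x = 0 := by rw [B_symm]; exact hxinf
    constructor <;>
      simp only [Set.mem_setOf_eq, B_add_left, B_add_right, B_smul_left, B_smul_right,
        hv₀null, hv₀inf, hlight, hinfv₀, hxv₀, hxinf, hv₀x, hinfx] <;> ring
  have hinv : Set.InvOn (fun x : Fin (n + 2) → ℝ => x + v₀ + ((1 : ℝ) / 2 * B n x x) • vinf)
      (fun v : Fin (n + 2) → ℝ => v - v₀ + B n v v₀ • vinf)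
      {v | B n v v = 0 ∧ B n v vinf = -1} {x | B n x v₀ = 0 ∧ B n x vinf = 0} := by
    constructor
    · rintro v ⟨hv, hvinf⟩
      have hv₀v : B n v₀ v = B n v v₀ := B_symm n v₀ v
      have hinfv : B n vinf v = -1 := by rw [B_symm]; exact hvinf
      have key : B n (v - v₀ + B n v v₀ • vinf) (v - v₀ + B n v v₀ • vinf) =
          -2 * B n v v₀ := by
        simp only [B_add_left, B_add_right, B_sub_left, B_sub_right, B_smul_left,
          B_smul_right, hv, hv₀null, hv₀inf, hlight, hinfv₀, hvinf, hinfv, hv₀v]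
        ring
      simp only [key]
      have : (1 : ℝ) / 2 * (-2 * B n v v₀) = -B n v v₀ := by ring
      rw [this]
      ext i
      simp [neg_smul]
      ring
    · rintro x ⟨hxv₀, hxinf⟩
      have hv₀x : B n v₀ x = 0 := by rw [B_symm]; exact hxv₀
      have hinfx : B n vinf x = 0 := by rw [B_symm]; exact hxinf
      have key : B n (x + v₀ + ((1 : ℝ) / 2 * B n x x) • vinf) v₀ =
          -(1 / 2 * B n x x) := by
        simp only [B_add_left, B_smul_left, hxv₀, hv₀null, hinfv₀]
        ring
      simp only [key]
      ext i
      simp [neg_smul]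
      ring
  exact ⟨hinv.bijOn hmaps1 hmaps2, hinv⟩
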